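/- Key recursion identity for the BRST-bar comparison: in a quantum Lie algebra, the elements W_n defined by W_2 = C_1 and W_{n+1} = Z_{n+1} - W_n δ_{n+1} satisfy -f_{1→m+1} W_m δ_{m+1} + x^{(2)}_{m+1} C_m = W_{m+1} f_{1→m}, where f and x^{(2)} are the braid-algebra elements evaluated in the representation σ_i ↦ σ_{i,i+1}. -/
import Mathlib


section QuantumLie

variable {K : Type*} [CommRing K] {N : ℕ}

/-- Matrix of `σ` acting at (0-based) positions `n, n+1` of `V^{⊗t}`. -/
def qlSigma (σm : Matrix (Fin N × Fin N) (Fin N × Fin N) K) (t n : ℕ) :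
    Matrix (Fin t → Fin N) (Fin t → Fin N) K := fun x y =>
  if h : n + 1 < t then
    σm (x ⟨n, by omega⟩, x ⟨n + 1, h⟩) (y ⟨n, by omega⟩, y ⟨n + 1, h⟩) *
      ∏ i : Fin t, (if (i : ℕ) = n ∨ (i : ℕ) = n + 1 then 1
        else if x i = y i then (1 : K) else 0)
  else 0

/-- Matrix of `C : V ⊗ V → V` applied to the (0-based) factors `n, n+1` of
`V^{⊗(t+1)}`, a map `V^{⊗(t+1)} → V^{⊗t}`; `Cc i j a = C^a_{ij}`. -/
def qlC (Cc : Fin N → Fin N → Fin N → K) (t n : ℕ) :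
    Matrix (Fin t → Fin N) (Fin (t + 1) → Fin N) K := fun x y =>
  if h : n < t then
    Cc (y ⟨n, by omega⟩) (y ⟨n + 1, by omega⟩) (x ⟨n, h⟩) *
      ∏ i : Fin t, (if (i : ℕ) = n then 1
        else if x i = y (if (i : ℕ) < n then i.castSucc else i.succ) then (1 : K) else 0)
  else 0

/-- Extension of an operator `V^{⊗b} → V^{⊗a}` by the identity on one extra trailing
tensor factor (this realizes the trailing `δ` insertions). -/
def qlExt {a b : ℕ} (M : Matrix (Fin a → Fin N) (Fin b → Fin N) K) :
    Matrix (Fin (a + 1) → Fin N) (Fin (b + 1) → Fin N) K := fun x y =>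
  (if x (Fin.last a) = y (Fin.last b) then (1 : K) else 0) *
    M (fun i => x i.castSucc) (fun j => y j.castSucc)

/-- `Z_2 = C_1`, `Z_{r+1} = C_r + σ_r Z_r δ_{r+1}` (here `qlZ σm Cc k = Z_{k+2}`;
operator words are read left to right, so a word `X Y` has matrix `Mat(Y) * Mat(X)`). -/
def qlZ (σm : Matrix (Fin N × Fin N) (Fin N × Fin N) K)
    (Cc : Fin N → Fin N → Fin N → K) :
    (k : ℕ) → Matrix (Fin (k + 1) → Fin N) (Fin (k + 2) → Fin N) K
  | 0 => qlC Cc 1 0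
  | k + 1 => qlC Cc (k + 2) (k + 1) + qlExt (qlZ σm Cc k) * qlSigma σm (k + 3) (k + 1)

/-- `W_2 = C_1`, `W_{n+1} = Z_{n+1} - W_n δ_{n+1}` (here `qlW σm Cc k = W_{k+2}`). -/
def qlW (σm : Matrix (Fin N × Fin N) (Fin N × Fin N) K)
    (Cc : Fin N → Fin N → Fin N → K) :
    (k : ℕ) → Matrix (Fin (k + 1) → Fin N) (Fin (k + 2) → Fin N) K
  | 0 => qlC Cc 1 0
  | k + 1 => qlZ σm Cc (k + 1) - qlExt (qlW σm Cc k)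

/-- `f_{1→m} = 1 - σ_{m-1} + σ_{m-2}σ_{m-1} - ⋯ + (-1)^{m-1} σ_1 ⋯ σ_{m-1}` acting on
`V^{⊗t}`, via the recursion `f_{1→m+1} = 1 - f_{1→m} σ_m` (1-based `σ_j` is
`qlSigma _ t (j-1)`; operator words are read left to right). -/
def qlF (σm : Matrix (Fin N × Fin N) (Fin N × Fin N) K) (t : ℕ) :
    ℕ → Matrix (Fin t → Fin N) (Fin t → Fin N) K
  | 0 => 1
  | 1 => 1
  | m + 2 => 1 - qlSigma σm t m * qlF σm t (m + 1)

/-- The quantum shuffle elements `x^{(2)}_m` acting on `V^{⊗t}`: `x^{(2)}_2 = 1` and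
`x^{(2)}_{m+1} = f_{1→m} + x^{(2)}_m σ_m σ_{m-1}` (here `qlX2 σm t m = x^{(2)}_m`;
operator words are read left to right). -/
def qlX2 (σm : Matrix (Fin N × Fin N) (Fin N × Fin N) K) (t : ℕ) :
    ℕ → Matrix (Fin t → Fin N) (Fin t → Fin N) K
  | 0 => 1
  | 1 => 1
  | 2 => 1
  | m + 3 => qlF σm t (m + 2) + qlSigma σm t m * qlSigma σm t (m + 1) * qlX2 σm t (m + 2)

end QuantumLie

section KronInfra

variable {K : Type*} [CommRing K] {N : ℕ}

/-- Split equivalence for index functions. -/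
def qlSplit (a c : ℕ) : ((Fin a → Fin N) × (Fin c → Fin N)) ≃ (Fin (a + c) → Fin N) where
  toFun p := Fin.append p.1 p.2
  invFun z := (fun i => z (Fin.castAdd c i), fun j => z (Fin.natAdd a j))
  left_inv p := by
    ext i
    · simp [Fin.append_left]
    · simp [Fin.append_right]
  right_inv z := by
    funext i
    refine Fin.addCases (fun i => ?_) (fun i => ?_) i
    · simp [Fin.append_left]
    · simp [Fin.append_right]

/-- Kronecker-style product of operators on tensor powers. -/
def kron {a b c d : ℕ} (A : Matrix (Fin a → Fin N) (Fin b → Fin N) K)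
    (B : Matrix (Fin c → Fin N) (Fin d → Fin N) K) :
    Matrix (Fin (a + c) → Fin N) (Fin (b + d) → Fin N) K := fun x y =>
  A (fun i => x (Fin.castAdd c i)) (fun j => y (Fin.castAdd d j)) *
    B (fun i => x (Fin.natAdd a i)) (fun j => y (Fin.natAdd b j))

theorem kron_mul {a b c d e f : ℕ} (A : Matrix (Fin a → Fin N) (Fin b → Fin N) K)
    (B : Matrix (Fin c → Fin N) (Fin d → Fin N) K)
    (A' : Matrix (Fin b → Fin N) (Fin e → Fin N) K)
    (B' : Matrix (Fin d → Fin N) (Fin f → Fin N) K) :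
    kron A B * kron A' B' = kron (A * A') (B * B') := by
  ext x y
  rw [Matrix.mul_apply]
  rw [← Equiv.sum_comp (qlSplit b d) (fun z => kron A B x z * kron A' B' z y)]
  rw [Fintype.sum_prod_type]
  have key : ∀ (u : Fin b → Fin N) (v : Fin d → Fin N),
      kron A B x (qlSplit b d (u, v)) * kron A' B' (qlSplit b d (u, v)) y =
        (A (fun i => x (Fin.castAdd c i)) u * A' u (fun j => y (Fin.castAdd f j))) *
        (B (fun i => x (Fin.natAdd a i)) v * B' v (fun j => y (Fin.natAdd e j))) := by
    intro u v
    have hu : (fun i => qlSplit b d (u, v) (Fin.castAdd d i)) = u := by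
      funext i; exact Fin.append_left u v i
    have hv : (fun i => qlSplit b d (u, v) (Fin.natAdd b i)) = v := by
      funext i; exact Fin.append_right u v i
    simp only [kron, hu, hv]
    ring
  simp only [key]
  rw [← Finset.sum_mul_sum]
  simp only [kron, Matrix.mul_apply]

theorem kron_one (a c : ℕ) :
    (kron (1 : Matrix (Fin a → Fin N) (Fin a → Fin N) K)
      (1 : Matrix (Fin c → Fin N) (Fin c → Fin N) K)) = 1 := by
  ext x y
  simp only [kron, Matrix.one_apply]
  by_cases h : x = y
  · subst h; simp
  · have : ¬((fun i => x (Fin.castAdd c i)) = (fun i => y (Fin.castAdd c i)) ∧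
        (fun i => x (Fin.natAdd a i)) = (fun i => y (Fin.natAdd a i))) := by
      intro hand
      apply h
      funext i
      refine Fin.addCases (fun i => ?_) (fun i => ?_) i
      · exact congrFun hand.1 i
      · exact congrFun hand.2 i
    rw [if_neg h]
    rcases not_and_or.mp this with h' | h'
    · rw [if_neg h', zero_mul]
    · rw [if_neg h', mul_zero]

theorem kron_add_right {a b c d : ℕ} (A : Matrix (Fin a → Fin N) (Fin b → Fin N) K)
    (B B' : Matrix (Fin c → Fin N) (Fin d → Fin N) K) :
    kron A (B + B') = kron A B + kron A B' := by
  ext x y; simp [kron, mul_add]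

theorem kron_add_left {a b c d : ℕ} (A A' : Matrix (Fin a → Fin N) (Fin b → Fin N) K)
    (B : Matrix (Fin c → Fin N) (Fin d → Fin N) K) :
    kron (A + A') B = kron A B + kron A' B := by
  ext x y; simp [kron, add_mul]

theorem kron_sub_left {a b c d : ℕ} (A A' : Matrix (Fin a → Fin N) (Fin b → Fin N) K)
    (B : Matrix (Fin c → Fin N) (Fin d → Fin N) K) :
    kron (A - A') B = kron A B - kron A' B := by
  ext x y; simp [kron, sub_mul]

theorem kron_one_comm {a b c d : ℕ} (A : Matrix (Fin a → Fin N) (Fin b → Fin N) K)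
    (B : Matrix (Fin c → Fin N) (Fin d → Fin N) K) :
    kron A (1 : Matrix (Fin c → Fin N) (Fin c → Fin N) K) *
      kron (1 : Matrix (Fin b → Fin N) (Fin b → Fin N) K) B =
    kron (1 : Matrix (Fin a → Fin N) (Fin a → Fin N) K) B *
      kron A (1 : Matrix (Fin d → Fin N) (Fin d → Fin N) K) := by
  rw [kron_mul, kron_mul, Matrix.mul_one, Matrix.one_mul, Matrix.mul_one, Matrix.one_mul]

end KronInfra

section RepLemmas

variable {K : Type*} [CommRing K] {N : ℕ}
variable (σm : Matrix (Fin N × Fin N) (Fin N × Fin N) K) (Cc : Fin N → Fin N → Fin N → K)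

theorem prod_delta {a : ℕ} (x y : Fin a → Fin N) :
    (∏ i : Fin a, if x i = y i then (1 : K) else 0) = if x = y then 1 else 0 := by
  by_cases h : x = y
  · subst h; simp
  · rw [if_neg h]
    obtain ⟨i, hi⟩ : ∃ i, x i ≠ y i := by
      by_contra hc
      push_neg at hc
      exact h (funext hc)
    exact Finset.prod_eq_zero (Finset.mem_univ i) (if_neg hi)

theorem repSL (l t n : ℕ) :
    kron (1 : Matrix (Fin l → Fin N) (Fin l → Fin N) K) (qlSigma σm t n) =
      qlSigma σm (l + t) (l + n) := by
  ext x y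
  by_cases h : n + 1 < t
  · have h' : l + n + 1 < l + t := by omega
    simp only [qlSigma, kron, dif_pos h, dif_pos h', Matrix.one_apply]
    rw [Fin.prod_univ_add (f := fun i : Fin (l + t) =>
      if (i : ℕ) = l + n ∨ (i : ℕ) = l + n + 1 then (1 : K)
      else if x i = y i then 1 else 0)]
    have e1 : (∏ i : Fin l, if ((Fin.castAdd t i : ℕ)) = l + n ∨ ((Fin.castAdd t i : ℕ)) = l + n + 1
          then (1:K) else if x (Fin.castAdd t i) = y (Fin.castAdd t i) then 1 else 0) =
        ∏ i : Fin l, if x (Fin.castAdd t i) = y (Fin.castAdd t i) then (1:K) else 0 := by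
      refine Finset.prod_congr rfl fun i _ => ?_
      have : ¬(((Fin.castAdd t i : ℕ)) = l + n ∨ ((Fin.castAdd t i : ℕ)) = l + n + 1) := by
        have := i.isLt; simp only [Fin.coe_castAdd]; omega
      rw [if_neg this]
    have e2 : (∏ i : Fin t, if ((Fin.natAdd l i : ℕ)) = l + n ∨ ((Fin.natAdd l i : ℕ)) = l + n + 1
          then (1:K) else if x (Fin.natAdd l i) = y (Fin.natAdd l i) then 1 else 0) =
        ∏ i : Fin t, if (i : ℕ) = n ∨ (i : ℕ) = n + 1 then (1:K)
          else if x (Fin.natAdd l i) = y (Fin.natAdd l i) then 1 else 0 := by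
      refine Finset.prod_congr rfl fun i _ => ?_
      have : (((Fin.natAdd l i : ℕ)) = l + n ∨ ((Fin.natAdd l i : ℕ)) = l + n + 1) ↔
          ((i : ℕ) = n ∨ (i : ℕ) = n + 1) := by
        simp only [Fin.coe_natAdd]; omega
      rcases Classical.em ((i : ℕ) = n ∨ (i : ℕ) = n + 1) with hc | hc
      · rw [if_pos (this.mpr hc), if_pos hc]
      · rw [if_neg (this.not.mpr hc), if_neg hc]
    rw [e1, e2, prod_delta]
    have hx1 : x ⟨l + n, by omega⟩ = (fun i => x (Fin.natAdd l i)) ⟨n, by omega⟩ := rfl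
    have hx2 : x ⟨l + n + 1, h'⟩ = (fun i => x (Fin.natAdd l i)) ⟨n + 1, h⟩ := by
      congr 1
    have hy1 : y ⟨l + n, by omega⟩ = (fun i => y (Fin.natAdd l i)) ⟨n, by omega⟩ := rfl
    have hy2 : y ⟨l + n + 1, h'⟩ = (fun i => y (Fin.natAdd l i)) ⟨n + 1, h⟩ := by
      congr 1
    rw [hx1, hx2, hy1, hy2]
    ring
  · have h' : ¬(l + n + 1 < l + t) := by omega
    simp only [qlSigma, kron, dif_neg h, dif_neg h', mul_zero]

end RepLemmas

section RepLemmas2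
variable {K : Type*} [CommRing K] {N : ℕ}
variable (σm : Matrix (Fin N × Fin N) (Fin N × Fin N) K) (Cc : Fin N → Fin N → Fin N → K)

theorem repSR (t n r : ℕ) (h : n + 1 < t) :
    kron (qlSigma σm t n) (1 : Matrix (Fin r → Fin N) (Fin r → Fin N) K) =
      qlSigma σm (t + r) n := by
  ext x y
  have h' : n + 1 < t + r := by omega
  simp only [qlSigma, kron, dif_pos h, dif_pos h', Matrix.one_apply]
  rw [Fin.prod_univ_add (f := fun i : Fin (t + r) =>
    if (i : ℕ) = n ∨ (i : ℕ) = n + 1 then (1 : K)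
    else if x i = y i then 1 else 0)]
  have e1 : (∏ i : Fin t, if ((Fin.castAdd r i : ℕ)) = n ∨ ((Fin.castAdd r i : ℕ)) = n + 1
        then (1:K) else if x (Fin.castAdd r i) = y (Fin.castAdd r i) then 1 else 0) =
      ∏ i : Fin t, if (i : ℕ) = n ∨ (i : ℕ) = n + 1 then (1:K)
        else if x (Fin.castAdd r i) = y (Fin.castAdd r i) then 1 else 0 := by
    refine Finset.prod_congr rfl fun i _ => rfl
  have e2 : (∏ i : Fin r, if ((Fin.natAdd t i : ℕ)) = n ∨ ((Fin.natAdd t i : ℕ)) = n + 1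
        then (1:K) else if x (Fin.natAdd t i) = y (Fin.natAdd t i) then 1 else 0) =
      ∏ i : Fin r, if x (Fin.natAdd t i) = y (Fin.natAdd t i) then (1:K) else 0 := by
    refine Finset.prod_congr rfl fun i _ => ?_
    have : ¬(((Fin.natAdd t i : ℕ)) = n ∨ ((Fin.natAdd t i : ℕ)) = n + 1) := by
      simp only [Fin.coe_natAdd]; omega
    rw [if_neg this]
  rw [e1, e2, prod_delta]
  have hx1 : x ⟨n, by omega⟩ = (fun i => x (Fin.castAdd r i)) ⟨n, by omega⟩ := rfl
  have hx2 : x ⟨n + 1, h'⟩ = (fun i => x (Fin.castAdd r i)) ⟨n + 1, h⟩ := rfl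
  have hy1 : y ⟨n, by omega⟩ = (fun i => y (Fin.castAdd r i)) ⟨n, by omega⟩ := rfl
  have hy2 : y ⟨n + 1, h'⟩ = (fun i => y (Fin.castAdd r i)) ⟨n + 1, h⟩ := rfl
  rw [hx1, hx2, hy1, hy2]
  ring

theorem repCL (l t n : ℕ) :
    kron (1 : Matrix (Fin l → Fin N) (Fin l → Fin N) K) (qlC Cc t n) =
      qlC Cc (l + t) (l + n) := by
  ext x y
  by_cases h : n < t
  · have h' : l + n < l + t := by omega
    simp only [qlC, kron, dif_pos h, dif_pos h', Matrix.one_apply]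
    rw [Fin.prod_univ_add (f := fun i : Fin (l + t) =>
      if (i : ℕ) = l + n then (1 : K)
      else if x i = y (if (i : ℕ) < l + n then i.castSucc else i.succ) then 1 else 0)]
    have e1 : (∏ i : Fin l, if ((Fin.castAdd t i : ℕ)) = l + n then (1:K)
          else if x (Fin.castAdd t i) =
            y (if ((Fin.castAdd t i : ℕ)) < l + n then (Fin.castAdd t i).castSucc
               else (Fin.castAdd t i).succ) then 1 else 0) =
        ∏ i : Fin l, if x (Fin.castAdd t i) = y (Fin.castAdd (t + 1) i) then (1:K) else 0 := by
      refine Finset.prod_congr rfl fun i _ => ?_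
      have hne : ¬(((Fin.castAdd t i : ℕ)) = l + n) := by
        have := i.isLt; simp only [Fin.coe_castAdd]; omega
      have hlt : ((Fin.castAdd t i : ℕ)) < l + n := by
        have := i.isLt; simp only [Fin.coe_castAdd]; omega
      rw [if_neg hne, if_pos hlt]
      have : (Fin.castAdd t i).castSucc = Fin.castAdd (t + 1) i := rfl
      rw [this]
    have e2 : (∏ i : Fin t, if ((Fin.natAdd l i : ℕ)) = l + n then (1:K)
          else if x (Fin.natAdd l i) =
            y (if ((Fin.natAdd l i : ℕ)) < l + n then (Fin.natAdd l i).castSucc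
               else (Fin.natAdd l i).succ) then 1 else 0) =
        ∏ i : Fin t, if (i : ℕ) = n then (1:K)
          else if x (Fin.natAdd l i) =
            y (Fin.natAdd l (if (i : ℕ) < n then i.castSucc else i.succ)) then 1 else 0 := by
      refine Finset.prod_congr rfl fun i _ => ?_
      have hiff : (((Fin.natAdd l i : ℕ)) = l + n) ↔ ((i : ℕ) = n) := by
        simp only [Fin.coe_natAdd]; omega
      rcases Classical.em ((i : ℕ) = n) with hc | hc
      · rw [if_pos (hiff.mpr hc), if_pos hc]
      · rw [if_neg (hiff.not.mpr hc), if_neg hc]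
        have hiff2 : (((Fin.natAdd l i : ℕ)) < l + n) ↔ ((i : ℕ) < n) := by
          simp only [Fin.coe_natAdd]; omega
        rcases Classical.em ((i : ℕ) < n) with hc2 | hc2
        · rw [if_pos (hiff2.mpr hc2), if_pos hc2]
          have : (Fin.natAdd l i).castSucc = Fin.natAdd l i.castSucc := rfl
          rw [this]
        · rw [if_neg (hiff2.not.mpr hc2), if_neg hc2]
          have : (Fin.natAdd l i).succ = Fin.natAdd l i.succ := rfl
          rw [this]
    rw [e1, e2, prod_delta]
    have hy1 : y ⟨l + n, by omega⟩ = (fun j => y (Fin.natAdd l j)) ⟨n, by omega⟩ := rfl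
    have hy2 : y ⟨l + n + 1, by omega⟩ = (fun j => y (Fin.natAdd l j)) ⟨n + 1, by omega⟩ := by
      congr 1
    have hx1 : x ⟨l + n, h'⟩ = (fun i => x (Fin.natAdd l i)) ⟨n, h⟩ := rfl
    rw [hy1, hy2, hx1]
    ring
  · have h' : ¬(l + n < l + t) := by omega
    simp only [qlC, kron, dif_neg h, dif_neg h', mul_zero]

theorem repCR (t n : ℕ) (h : n < t) :
    kron (qlC Cc t n) (1 : Matrix (Fin 1 → Fin N) (Fin 1 → Fin N) K) =
      qlC Cc (t + 1) n := by
  ext x y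
  have h' : n < t + 1 := by omega
  simp only [qlC, kron, dif_pos h, dif_pos h', Matrix.one_apply]
  rw [Fin.prod_univ_add (f := fun i : Fin (t + 1) =>
    if (i : ℕ) = n then (1 : K)
    else if x i = y (if (i : ℕ) < n then i.castSucc else i.succ) then 1 else 0)]
  have e1 : (∏ i : Fin t, if ((Fin.castAdd 1 i : ℕ)) = n then (1:K)
        else if x (Fin.castAdd 1 i) =
          y (if ((Fin.castAdd 1 i : ℕ)) < n then (Fin.castAdd 1 i).castSucc
             else (Fin.castAdd 1 i).succ) then 1 else 0) =
      ∏ i : Fin t, if (i : ℕ) = n then (1:K)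
        else if x (Fin.castAdd 1 i) =
          y (Fin.castAdd 1 ((if (i : ℕ) < n then i.castSucc else i.succ))) then 1 else 0 := by
    refine Finset.prod_congr rfl fun i _ => ?_
    simp only [Fin.coe_castAdd]
    rcases Classical.em ((i : ℕ) = n) with hc | hc
    · rw [if_pos hc, if_pos hc]
    · rw [if_neg hc, if_neg hc]
      rcases Classical.em ((i : ℕ) < n) with hc2 | hc2
      · simp only [if_pos hc2]
        have he : (Fin.castAdd 1 i).castSucc = Fin.castAdd 1 i.castSucc := rfl
        simp only [he]
      · simp only [if_neg hc2]
        have he : (Fin.castAdd 1 i).succ = Fin.castAdd 1 i.succ := rfl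
        simp only [he]
  have e2 : (∏ i : Fin 1, if ((Fin.natAdd t i : ℕ)) = n then (1:K)
        else if x (Fin.natAdd t i) =
          y (if ((Fin.natAdd t i : ℕ)) < n then (Fin.natAdd t i).castSucc
             else (Fin.natAdd t i).succ) then 1 else 0) =
      ∏ i : Fin 1, if x (Fin.natAdd t i) = y (Fin.natAdd (t + 1) i) then (1:K) else 0 := by
    refine Finset.prod_congr rfl fun i _ => ?_
    have hne : ¬(((Fin.natAdd t i : ℕ)) = n) := by
      simp only [Fin.coe_natAdd]; omega
    have hnlt : ¬(((Fin.natAdd t i : ℕ)) < n) := by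
      simp only [Fin.coe_natAdd]; omega
    rw [if_neg hne, if_neg hnlt]
    have : (Fin.natAdd t i).succ = Fin.natAdd (t + 1) i := by
      apply Fin.ext; simp only [Fin.val_succ, Fin.coe_natAdd]; omega
    rw [this]
  rw [e1, e2, prod_delta]
  have hx1 : x ⟨n, h'⟩ = (fun i => x (Fin.castAdd 1 i)) ⟨n, h⟩ := rfl
  have hy1 : y ⟨n, by omega⟩ = (fun j => y (Fin.castAdd 1 j)) ⟨n, by omega⟩ := rfl
  have hy2 : y ⟨n + 1, by omega⟩ = (fun j => y (Fin.castAdd 1 j)) ⟨n + 1, by omega⟩ := rfl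
  rw [hx1, hy1, hy2]
  ring

end RepLemmas2

section ExtLemmas
variable {K : Type*} [CommRing K] {N : ℕ}
variable (σm : Matrix (Fin N × Fin N) (Fin N × Fin N) K) (Cc : Fin N → Fin N → Fin N → K)

theorem one_apply_fin1 (f g : Fin 1 → Fin N) :
    (1 : Matrix (Fin 1 → Fin N) (Fin 1 → Fin N) K) f g = if f 0 = g 0 then 1 else 0 := by
  by_cases h : f 0 = g 0
  · have hfg : f = g := funext fun i => by fin_cases i; exact h
    simp [hfg, h, Matrix.one_apply]
  · have hfg : f ≠ g := fun he => h (by rw [he])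
    simp [hfg, h, Matrix.one_apply]

theorem extEq {a b : ℕ} (A : Matrix (Fin a → Fin N) (Fin b → Fin N) K) :
    qlExt A = kron A (1 : Matrix (Fin 1 → Fin N) (Fin 1 → Fin N) K) := by
  ext x y
  rw [qlExt, kron, one_apply_fin1, mul_comm]
  have h1 : x (Fin.last a) = x (Fin.natAdd a 0) := rfl
  have h2 : y (Fin.last b) = y (Fin.natAdd b 0) := rfl
  have h3 : (fun i : Fin a => x i.castSucc) = fun i => x (Fin.castAdd 1 i) := rfl
  have h4 : (fun j : Fin b => y j.castSucc) = fun j => y (Fin.castAdd 1 j) := rfl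
  rw [h1, h2, h3, h4]

theorem kron_assoc_one {a b c d : ℕ} (A : Matrix (Fin a → Fin N) (Fin b → Fin N) K)
    (B : Matrix (Fin c → Fin N) (Fin d → Fin N) K) :
    kron (kron A B) (1 : Matrix (Fin 1 → Fin N) (Fin 1 → Fin N) K) =
      kron A (kron B (1 : Matrix (Fin 1 → Fin N) (Fin 1 → Fin N) K)) := by
  ext x y
  simp only [kron, mul_assoc]
  have h3 : (fun i : Fin 1 => x (Fin.natAdd (a + c) i)) =
      (fun i => x (Fin.natAdd a (Fin.natAdd c i))) := by
    funext i; congr 1; apply Fin.ext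
    simp only [Fin.coe_natAdd]; omega
  have h4 : (fun j : Fin 1 => y (Fin.natAdd (b + d) j)) =
      (fun j => y (Fin.natAdd b (Fin.natAdd d j))) := by
    funext j; congr 1; apply Fin.ext
    simp only [Fin.coe_natAdd]; omega
  rw [h3, h4]
  rfl

theorem ext_mul {a b c : ℕ} (A : Matrix (Fin a → Fin N) (Fin b → Fin N) K)
    (B : Matrix (Fin b → Fin N) (Fin c → Fin N) K) :
    qlExt (A * B) = qlExt A * qlExt B := by
  rw [extEq, extEq, extEq, kron_mul, Matrix.one_mul]

theorem ext_add {a b : ℕ} (A B : Matrix (Fin a → Fin N) (Fin b → Fin N) K) :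
    qlExt (A + B) = qlExt A + qlExt B := by
  ext x y; simp [qlExt, mul_add]

theorem ext_sub {a b : ℕ} (A B : Matrix (Fin a → Fin N) (Fin b → Fin N) K) :
    qlExt (A - B) = qlExt A - qlExt B := by
  ext x y; simp [qlExt, mul_sub]

theorem ext_neg {a b : ℕ} (A : Matrix (Fin a → Fin N) (Fin b → Fin N) K) :
    qlExt (-A) = -qlExt A := by
  ext x y; simp [qlExt]

theorem extExt {a b : ℕ} (A : Matrix (Fin a → Fin N) (Fin b → Fin N) K) :
    qlExt (qlExt A) = kron A (1 : Matrix (Fin 2 → Fin N) (Fin 2 → Fin N) K) := by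
  rw [extEq, extEq, kron_assoc_one,
    show (kron (1 : Matrix (Fin 1 → Fin N) (Fin 1 → Fin N) K)
        (1 : Matrix (Fin 1 → Fin N) (Fin 1 → Fin N) K)) =
      (1 : Matrix (Fin 2 → Fin N) (Fin 2 → Fin N) K) from kron_one 1 1]

theorem ext3 {a b : ℕ} (A : Matrix (Fin a → Fin N) (Fin b → Fin N) K) :
    qlExt (qlExt (qlExt A)) = kron A (1 : Matrix (Fin 3 → Fin N) (Fin 3 → Fin N) K) := by
  rw [extEq, extExt, kron_assoc_one,
    show (kron (1 : Matrix (Fin 2 → Fin N) (Fin 2 → Fin N) K)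
        (1 : Matrix (Fin 1 → Fin N) (Fin 1 → Fin N) K)) =
      (1 : Matrix (Fin 3 → Fin N) (Fin 3 → Fin N) K) from kron_one 2 1]

end ExtLemmas

section FXLemmas
variable {K : Type*} [CommRing K] {N : ℕ}
variable (σm : Matrix (Fin N × Fin N) (Fin N × Fin N) K) (Cc : Fin N → Fin N → Fin N → K)

theorem repFR (t r : ℕ) : ∀ m, m ≤ t →
    kron (qlF σm t m) (1 : Matrix (Fin r → Fin N) (Fin r → Fin N) K) = qlF σm (t + r) m := by
  intro m
  induction m using Nat.strong_induction_on with
  | _ m ih =>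
    match m with
    | 0 => intro _; exact kron_one t r
    | 1 => intro _; exact kron_one t r
    | (m + 2) =>
      intro h
      have e1 : qlF σm t (m + 2) = 1 - qlSigma σm t m * qlF σm t (m + 1) := rfl
      have e2 : qlF σm (t + r) (m + 2) = 1 - qlSigma σm (t + r) m * qlF σm (t + r) (m + 1) := rfl
      rw [e1, e2, kron_sub_left]
      have hm := kron_mul (qlSigma σm t m) (1 : Matrix (Fin r → Fin N) (Fin r → Fin N) K)
        (qlF σm t (m + 1)) (1 : Matrix (Fin r → Fin N) (Fin r → Fin N) K)
      rw [Matrix.one_mul] at hm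
      rw [← hm, repSR σm t m r (by omega), ih (m + 1) (by omega) (by omega), kron_one]

theorem repXR (t r : ℕ) : ∀ m, m ≤ t →
    kron (qlX2 σm t m) (1 : Matrix (Fin r → Fin N) (Fin r → Fin N) K) = qlX2 σm (t + r) m := by
  intro m
  induction m using Nat.strong_induction_on with
  | _ m ih =>
    match m with
    | 0 => intro _; exact kron_one t r
    | 1 => intro _; exact kron_one t r
    | 2 => intro _; exact kron_one t r
    | (m + 3) =>
      intro h
      have e1 : qlX2 σm t (m + 3) =
          qlF σm t (m + 2) + qlSigma σm t m * qlSigma σm t (m + 1) * qlX2 σm t (m + 2) := rfl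
      have e2 : qlX2 σm (t + r) (m + 3) =
          qlF σm (t + r) (m + 2) +
            qlSigma σm (t + r) m * qlSigma σm (t + r) (m + 1) * qlX2 σm (t + r) (m + 2) := rfl
      rw [e1, e2, kron_add_left]
      have hm1 := kron_mul (qlSigma σm t m * qlSigma σm t (m + 1))
        (1 : Matrix (Fin r → Fin N) (Fin r → Fin N) K)
        (qlX2 σm t (m + 2)) (1 : Matrix (Fin r → Fin N) (Fin r → Fin N) K)
      rw [Matrix.one_mul] at hm1
      have hm2 := kron_mul (qlSigma σm t m) (1 : Matrix (Fin r → Fin N) (Fin r → Fin N) K)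
        (qlSigma σm t (m + 1)) (1 : Matrix (Fin r → Fin N) (Fin r → Fin N) K)
      rw [Matrix.one_mul] at hm2
      rw [repFR σm t r (m + 2) (by omega), ← hm1, ← hm2,
        repSR σm t m r (by omega), repSR σm t (m + 1) r (by omega),
        ih (m + 2) (by omega) (by omega)]

theorem extF (t m : ℕ) (h : m ≤ t) : qlExt (qlF σm t m) = qlF σm (t + 1) m := by
  rw [extEq, repFR σm t 1 m h]

theorem extX (t m : ℕ) (h : m ≤ t) : qlExt (qlX2 σm t m) = qlX2 σm (t + 1) m := by
  rw [extEq, repXR σm t 1 m h]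

theorem extS (t n : ℕ) (h : n + 1 < t) : qlExt (qlSigma σm t n) = qlSigma σm (t + 1) n := by
  rw [extEq, repSR σm t n 1 h]

theorem extC (t n : ℕ) (h : n < t) : qlExt (qlC Cc t n) = qlC Cc (t + 1) n := by
  rw [extEq, repCR Cc t n h]

end FXLemmas

section PadLemmas
variable {K : Type*} [CommRing K] {N : ℕ}
variable (σm : Matrix (Fin N × Fin N) (Fin N × Fin N) K) (Cc : Fin N → Fin N → Fin N → K)

theorem padBraid
    (hbraid : qlSigma σm 3 0 * qlSigma σm 3 1 * qlSigma σm 3 0 =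
      qlSigma σm 3 1 * qlSigma σm 3 0 * qlSigma σm 3 1) (l : ℕ) :
    qlSigma σm (l + 3) l * qlSigma σm (l + 3) (l + 1) * qlSigma σm (l + 3) l =
      qlSigma σm (l + 3) (l + 1) * qlSigma σm (l + 3) l * qlSigma σm (l + 3) (l + 1) := by
  have h0 : qlSigma σm (l + 3) l =
      kron (1 : Matrix (Fin l → Fin N) (Fin l → Fin N) K) (qlSigma σm 3 0) :=
    (repSL σm l 3 0).symm
  have h1 : qlSigma σm (l + 3) (l + 1) =
      kron (1 : Matrix (Fin l → Fin N) (Fin l → Fin N) K) (qlSigma σm 3 1) :=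
    (repSL σm l 3 1).symm
  rw [h0, h1]
  simp only [kron_mul, Matrix.one_mul]
  exact congrArg _ hbraid

theorem padRel3
    (hrel3 : qlSigma σm 2 0 * qlC Cc 2 0 =
      qlC Cc 2 1 * qlSigma σm 3 0 * qlSigma σm 3 1) (l : ℕ) :
    qlSigma σm (l + 2) l * qlC Cc (l + 2) l =
      qlC Cc (l + 2) (l + 1) * qlSigma σm (l + 3) l * qlSigma σm (l + 3) (l + 1) := by
  have h0 : qlSigma σm (l + 2) l =
      kron (1 : Matrix (Fin l → Fin N) (Fin l → Fin N) K) (qlSigma σm 2 0) :=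
    (repSL σm l 2 0).symm
  have h1 : qlC Cc (l + 2) l =
      kron (1 : Matrix (Fin l → Fin N) (Fin l → Fin N) K) (qlC Cc 2 0) :=
    (repCL Cc l 2 0).symm
  have h2 : qlC Cc (l + 2) (l + 1) =
      kron (1 : Matrix (Fin l → Fin N) (Fin l → Fin N) K) (qlC Cc 2 1) :=
    (repCL Cc l 2 1).symm
  have h3 : qlSigma σm (l + 3) l =
      kron (1 : Matrix (Fin l → Fin N) (Fin l → Fin N) K) (qlSigma σm 3 0) :=
    (repSL σm l 3 0).symm
  have h4 : qlSigma σm (l + 3) (l + 1) =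
      kron (1 : Matrix (Fin l → Fin N) (Fin l → Fin N) K) (qlSigma σm 3 1) :=
    (repSL σm l 3 1).symm
  rw [h0, h1, h2, h3, h4]
  simp only [kron_mul, Matrix.one_mul]
  exact congrArg _ hrel3

theorem padRel3'
    (hrel3 : qlSigma σm 2 0 * qlC Cc 2 0 =
      qlC Cc 2 1 * qlSigma σm 3 0 * qlSigma σm 3 1) (l : ℕ) :
    qlSigma σm (l + 3) l * qlC Cc (l + 3) l =
      qlC Cc (l + 3) (l + 1) * qlSigma σm (l + 4) l * qlSigma σm (l + 4) (l + 1) := by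
  have hrel3R : qlSigma σm 3 0 * qlC Cc 3 0 =
      qlC Cc 3 1 * qlSigma σm 4 0 * qlSigma σm 4 1 := by
    have := congrArg qlExt hrel3
    rw [ext_mul, ext_mul, ext_mul, extS σm 2 0 (by omega), extC Cc 2 0 (by omega),
      extC Cc 2 1 (by omega), extS σm 3 0 (by omega), extS σm 3 1 (by omega)] at this
    exact this
  have h0 : qlSigma σm (l + 3) l =
      kron (1 : Matrix (Fin l → Fin N) (Fin l → Fin N) K) (qlSigma σm 3 0) :=
    (repSL σm l 3 0).symm
  have h1 : qlC Cc (l + 3) l =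
      kron (1 : Matrix (Fin l → Fin N) (Fin l → Fin N) K) (qlC Cc 3 0) :=
    (repCL Cc l 3 0).symm
  have h2 : qlC Cc (l + 3) (l + 1) =
      kron (1 : Matrix (Fin l → Fin N) (Fin l → Fin N) K) (qlC Cc 3 1) :=
    (repCL Cc l 3 1).symm
  have h3 : qlSigma σm (l + 4) l =
      kron (1 : Matrix (Fin l → Fin N) (Fin l → Fin N) K) (qlSigma σm 4 0) :=
    (repSL σm l 4 0).symm
  have h4 : qlSigma σm (l + 4) (l + 1) =
      kron (1 : Matrix (Fin l → Fin N) (Fin l → Fin N) K) (qlSigma σm 4 1) :=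
    (repSL σm l 4 1).symm
  rw [h0, h1, h2, h3, h4]
  simp only [kron_mul, Matrix.one_mul]
  exact congrArg _ hrel3R

theorem padRel4
    (hrel4 : qlSigma σm 2 0 * (qlC Cc 2 0 * qlSigma σm 3 1 + qlC Cc 2 1) =
      (qlC Cc 2 0 * qlSigma σm 3 1 + qlC Cc 2 1) * qlSigma σm 3 0) (l : ℕ) :
    qlSigma σm (l + 2) l *
        (qlC Cc (l + 2) l * qlSigma σm (l + 3) (l + 1) + qlC Cc (l + 2) (l + 1)) =
      (qlC Cc (l + 2) l * qlSigma σm (l + 3) (l + 1) + qlC Cc (l + 2) (l + 1)) *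
        qlSigma σm (l + 3) l := by
  have h0 : qlSigma σm (l + 2) l =
      kron (1 : Matrix (Fin l → Fin N) (Fin l → Fin N) K) (qlSigma σm 2 0) :=
    (repSL σm l 2 0).symm
  have h1 : qlC Cc (l + 2) l =
      kron (1 : Matrix (Fin l → Fin N) (Fin l → Fin N) K) (qlC Cc 2 0) :=
    (repCL Cc l 2 0).symm
  have h2 : qlC Cc (l + 2) (l + 1) =
      kron (1 : Matrix (Fin l → Fin N) (Fin l → Fin N) K) (qlC Cc 2 1) :=
    (repCL Cc l 2 1).symm
  have h3 : qlSigma σm (l + 3) l =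
      kron (1 : Matrix (Fin l → Fin N) (Fin l → Fin N) K) (qlSigma σm 3 0) :=
    (repSL σm l 3 0).symm
  have h4 : qlSigma σm (l + 3) (l + 1) =
      kron (1 : Matrix (Fin l → Fin N) (Fin l → Fin N) K) (qlSigma σm 3 1) :=
    (repSL σm l 3 1).symm
  rw [h0, h1, h2, h3, h4]
  simp only [kron_mul, Matrix.one_mul]
  simp only [← kron_add_right]
  simp only [kron_mul, Matrix.one_mul]
  exact congrArg _ hrel4

end PadLemmas

section CommLemmas
variable {K : Type*} [CommRing K] {N : ℕ}
variable (σm : Matrix (Fin N × Fin N) (Fin N × Fin N) K) (Cc : Fin N → Fin N → Fin N → K)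

/-- σ acting on the two trailing identity factors commutes past `A ⊗ 1 ⊗ 1`. -/
theorem commSEE {α β : ℕ} (A : Matrix (Fin α → Fin N) (Fin β → Fin N) K) :
    qlSigma σm (α + 2) α * kron A (1 : Matrix (Fin 2 → Fin N) (Fin 2 → Fin N) K) =
      kron A (1 : Matrix (Fin 2 → Fin N) (Fin 2 → Fin N) K) * qlSigma σm (β + 2) β := by
  have h0 : qlSigma σm (α + 2) α =
      kron (1 : Matrix (Fin α → Fin N) (Fin α → Fin N) K) (qlSigma σm 2 0) :=
    (repSL σm α 2 0).symm
  have h1 : qlSigma σm (β + 2) β =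
      kron (1 : Matrix (Fin β → Fin N) (Fin β → Fin N) K) (qlSigma σm 2 0) :=
    (repSL σm β 2 0).symm
  rw [h0, h1, kron_mul, kron_mul, Matrix.one_mul, Matrix.mul_one, Matrix.one_mul,
    Matrix.mul_one]

/-- σ at distance one into three trailing identity factors commutes past `A ⊗ 1⊗3`. -/
theorem commSEEE {α β : ℕ} (A : Matrix (Fin α → Fin N) (Fin β → Fin N) K) :
    qlSigma σm (α + 3) α * kron A (1 : Matrix (Fin 3 → Fin N) (Fin 3 → Fin N) K) =
      kron A (1 : Matrix (Fin 3 → Fin N) (Fin 3 → Fin N) K) * qlSigma σm (β + 3) β := by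
  have h0 : qlSigma σm (α + 3) α =
      kron (1 : Matrix (Fin α → Fin N) (Fin α → Fin N) K) (qlSigma σm 3 0) :=
    (repSL σm α 3 0).symm
  have h1 : qlSigma σm (β + 3) β =
      kron (1 : Matrix (Fin β → Fin N) (Fin β → Fin N) K) (qlSigma σm 3 0) :=
    (repSL σm β 3 0).symm
  rw [h0, h1, kron_mul, kron_mul, Matrix.one_mul, Matrix.mul_one, Matrix.one_mul,
    Matrix.mul_one]

theorem commFS (x m : ℕ) (h : m ≤ x) :
    qlF σm (x + 2) m * qlSigma σm (x + 2) x = qlSigma σm (x + 2) x * qlF σm (x + 2) m := by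
  have h0 : qlF σm (x + 2) m = kron (qlF σm x m) (1 : Matrix (Fin 2 → Fin N) (Fin 2 → Fin N) K) :=
    (repFR σm x 2 m h).symm
  have h1 : qlSigma σm (x + 2) x =
      kron (1 : Matrix (Fin x → Fin N) (Fin x → Fin N) K) (qlSigma σm 2 0) :=
    (repSL σm x 2 0).symm
  rw [h0, h1, kron_mul, kron_mul, Matrix.one_mul, Matrix.mul_one, Matrix.one_mul,
    Matrix.mul_one]

theorem commFC (x m : ℕ) (h : m ≤ x) :
    qlF σm (x + 1) m * qlC Cc (x + 1) x = qlC Cc (x + 1) x * qlF σm (x + 2) m := by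
  have h0 : qlF σm (x + 1) m = kron (qlF σm x m) (1 : Matrix (Fin 1 → Fin N) (Fin 1 → Fin N) K) :=
    (repFR σm x 1 m h).symm
  have h1 : qlC Cc (x + 1) x =
      kron (1 : Matrix (Fin x → Fin N) (Fin x → Fin N) K) (qlC Cc 1 0) :=
    (repCL Cc x 1 0).symm
  have h2 : qlF σm (x + 2) m = kron (qlF σm x m) (1 : Matrix (Fin 2 → Fin N) (Fin 2 → Fin N) K) :=
    (repFR σm x 2 m h).symm
  rw [h0, h1, h2, kron_mul, kron_mul, Matrix.one_mul, Matrix.mul_one, Matrix.one_mul,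
    Matrix.mul_one]

end CommLemmas

section AuxStep
variable {K : Type*} [CommRing K] {N : ℕ}

set_option maxHeartbeats 4000000 in
theorem aux_step (σm : Matrix (Fin N × Fin N) (Fin N × Fin N) K)
    (Cc : Fin N → Fin N → Fin N → K)
    (hbraid : qlSigma σm 3 0 * qlSigma σm 3 1 * qlSigma σm 3 0 =
      qlSigma σm 3 1 * qlSigma σm 3 0 * qlSigma σm 3 1)
    (hrel3 : qlSigma σm 2 0 * qlC Cc 2 0 =
      qlC Cc 2 1 * qlSigma σm 3 0 * qlSigma σm 3 1)
    (hrel4 : qlSigma σm 2 0 * (qlC Cc 2 0 * qlSigma σm 3 1 + qlC Cc 2 1) =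
      (qlC Cc 2 0 * qlSigma σm 3 1 + qlC Cc 2 1) * qlSigma σm 3 0)
    (k : ℕ) (w : Matrix (Fin (k + 3) → Fin N) (Fin (k + 4) → Fin N) K)
    (hZ : qlExt (qlExt (qlZ σm Cc k)) = qlExt (qlExt (qlW σm Cc k)) + w)
    (hw1 : qlSigma σm (k + 3) k * w = w * qlSigma σm (k + 4) (k + 1))
    (hw2 : qlSigma σm (k + 3) (k + 1) * w = w * qlSigma σm (k + 4) (k + 2))
    (hIH : -(qlExt (qlW σm Cc k) * qlF σm (k + 3) (k + 3)) +
        qlC Cc (k + 2) (k + 1) * qlX2 σm (k + 3) (k + 3) =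
      qlF σm (k + 2) (k + 2) * qlW σm Cc (k + 1))
    (hIH2 : qlF σm (k + 3) (k + 1) * qlExt (qlExt (qlW σm Cc k)) =
      -(w * qlF σm (k + 4) (k + 2)) + qlC Cc (k + 3) k * qlX2 σm (k + 4) (k + 2)) :
    -(qlExt (qlW σm Cc (k + 1)) * qlF σm (k + 4) (k + 4)) +
        qlC Cc (k + 3) (k + 2) * qlX2 σm (k + 4) (k + 4) =
      qlF σm (k + 3) (k + 3) * qlW σm Cc (k + 2) := by
  -- abbreviations (as plain terms)
  -- padded IH (one delta appended)
  have h1 : qlF σm (k + 3) (k + 2) * qlExt (qlW σm Cc (k + 1)) =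
      -(qlExt (qlExt (qlW σm Cc k)) * qlF σm (k + 4) (k + 3)) +
        qlC Cc (k + 3) (k + 1) * qlX2 σm (k + 4) (k + 3) := by
    have h := congrArg qlExt hIH
    rw [ext_add, ext_neg, ext_mul, ext_mul, ext_mul, extF σm (k + 3) (k + 3) le_rfl,
      extX σm (k + 3) (k + 3) le_rfl, extC Cc (k + 2) (k + 1) (by omega),
      extF σm (k + 2) (k + 2) le_rfl] at h
    exact h.symm
  -- expansion of a = E W (k+1)
  have ha : qlExt (qlW σm Cc (k + 1)) =
      qlC Cc (k + 3) (k + 1) +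
        qlExt (qlExt (qlZ σm Cc k)) * qlSigma σm (k + 4) (k + 1) -
        qlExt (qlExt (qlW σm Cc k)) := by
    rw [show qlW σm Cc (k + 1) = qlZ σm Cc (k + 1) - qlExt (qlW σm Cc k) from rfl,
      show qlZ σm Cc (k + 1) =
        qlC Cc (k + 2) (k + 1) + qlExt (qlZ σm Cc k) * qlSigma σm (k + 3) (k + 1) from rfl,
      ext_sub, ext_add, ext_mul, extC Cc (k + 2) (k + 1) (by omega),
      extS σm (k + 3) (k + 1) (by omega)]
  have hEZ : qlExt (qlZ σm Cc (k + 1)) =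
      qlExt (qlW σm Cc (k + 1)) + qlExt (qlExt (qlW σm Cc k)) := by
    rw [show qlW σm Cc (k + 1) = qlZ σm Cc (k + 1) - qlExt (qlW σm Cc k) from rfl, ext_sub]
    abel
  -- conditional padded relations
  have hPR4 : qlSigma σm (k + 3) (k + 1) *
      (qlC Cc (k + 3) (k + 1) * qlSigma σm (k + 4) (k + 2) + qlC Cc (k + 3) (k + 2)) =
      (qlC Cc (k + 3) (k + 1) * qlSigma σm (k + 4) (k + 2) + qlC Cc (k + 3) (k + 2)) *
        qlSigma σm (k + 4) (k + 1) := padRel4 σm Cc hrel4 (k + 1)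
  have hPR3a : qlSigma σm (k + 3) (k + 1) * qlC Cc (k + 3) (k + 1) =
      qlC Cc (k + 3) (k + 2) * qlSigma σm (k + 4) (k + 1) * qlSigma σm (k + 4) (k + 2) :=
    padRel3 σm Cc hrel3 (k + 1)
  have hPR3b : qlSigma σm (k + 3) k * qlC Cc (k + 3) k =
      qlC Cc (k + 3) (k + 1) * qlSigma σm (k + 4) k * qlSigma σm (k + 4) (k + 1) :=
    padRel3' σm Cc hrel3 k
  have hPB : qlSigma σm (k + 4) (k + 1) * qlSigma σm (k + 4) (k + 2) * qlSigma σm (k + 4) (k + 1) =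
      qlSigma σm (k + 4) (k + 2) * qlSigma σm (k + 4) (k + 1) * qlSigma σm (k + 4) (k + 2) :=
    padBraid σm hbraid (k + 1)
  -- unconditional commutations
  have hC1 : qlF σm (k + 3) (k + 2) * qlC Cc (k + 3) (k + 2) =
      qlC Cc (k + 3) (k + 2) * qlF σm (k + 4) (k + 2) := commFC σm Cc (k + 2) (k + 2) le_rfl
  have hC2 : qlF σm (k + 4) (k + 2) * qlSigma σm (k + 4) (k + 2) =
      qlSigma σm (k + 4) (k + 2) * qlF σm (k + 4) (k + 2) := commFS σm (k + 2) (k + 2) le_rfl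
  have hC3 : qlSigma σm (k + 3) (k + 1) * qlExt (qlExt (qlZ σm Cc k)) =
      qlExt (qlExt (qlZ σm Cc k)) * qlSigma σm (k + 4) (k + 2) := by
    have h := commSEE σm (qlZ σm Cc k)
    rwa [← extExt] at h
  have hC3b : qlSigma σm (k + 3) (k + 1) * qlExt (qlExt (qlW σm Cc k)) =
      qlExt (qlExt (qlW σm Cc k)) * qlSigma σm (k + 4) (k + 2) := by
    have h := commSEE σm (qlW σm Cc k)
    rwa [← extExt] at h
  -- recursion unfoldings
  have hW2 : qlW σm Cc (k + 2) = qlC Cc (k + 3) (k + 2) +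
      qlExt (qlZ σm Cc (k + 1)) * qlSigma σm (k + 4) (k + 2) - qlExt (qlW σm Cc (k + 1)) := rfl
  have hF4 : qlF σm (k + 4) (k + 4) =
      1 - qlSigma σm (k + 4) (k + 2) * qlF σm (k + 4) (k + 3) := rfl
  have hF3t : qlF σm (k + 4) (k + 3) =
      1 - qlSigma σm (k + 4) (k + 1) * qlF σm (k + 4) (k + 2) := rfl
  have hF3 : qlF σm (k + 3) (k + 3) =
      1 - qlSigma σm (k + 3) (k + 1) * qlF σm (k + 3) (k + 2) := rfl
  have hF2 : qlF σm (k + 3) (k + 2) =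
      1 - qlSigma σm (k + 3) k * qlF σm (k + 3) (k + 1) := rfl
  have hX4 : qlX2 σm (k + 4) (k + 4) = qlF σm (k + 4) (k + 3) +
      qlSigma σm (k + 4) (k + 1) * qlSigma σm (k + 4) (k + 2) * qlX2 σm (k + 4) (k + 3) := rfl
  have hX3 : qlX2 σm (k + 4) (k + 3) = qlF σm (k + 4) (k + 2) +
      qlSigma σm (k + 4) k * qlSigma σm (k + 4) (k + 1) * qlX2 σm (k + 4) (k + 2) := rfl
  -- abbreviations
  set a := qlExt (qlW σm Cc (k + 1)) with ha_def
  set b := qlExt (qlExt (qlW σm Cc k)) with hb_def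
  set Zk := qlExt (qlExt (qlZ σm Cc k)) with hZk_def
  set s1 := qlSigma σm (k + 3) k with hs1_def
  set s2 := qlSigma σm (k + 3) (k + 1) with hs2_def
  set S1 := qlSigma σm (k + 4) k with hS1_def
  set S2 := qlSigma σm (k + 4) (k + 1) with hS2_def
  set S3 := qlSigma σm (k + 4) (k + 2) with hS3_def
  set c0 := qlC Cc (k + 3) k with hc0_def
  set c1 := qlC Cc (k + 3) (k + 1) with hc1_def
  set c3 := qlC Cc (k + 3) (k + 2) with hc3_def
  set F1 := qlF σm (k + 3) (k + 1) with hF1_def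
  set F2 := qlF σm (k + 3) (k + 2) with hF2_def
  set F2t := qlF σm (k + 4) (k + 2) with hF2t_def
  set F3t := qlF σm (k + 4) (k + 3) with hF3t_def
  set X3 := qlX2 σm (k + 4) (k + 3) with hX3_def
  set X2t := qlX2 σm (k + 4) (k + 2) with hX2t_def
  -- instance equalities
  have Eh9 : s2 * F2 * c3 = s2 * c3 * F2t := by
    rw [Matrix.mul_assoc, hC1, ← Matrix.mul_assoc]
  have Eh1b : s2 * F2 * a = -(s2 * b * F3t) + s2 * c1 * X3 := by
    rw [Matrix.mul_assoc, h1]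
    simp only [Matrix.mul_add, Matrix.mul_neg, ← Matrix.mul_assoc]
  have z1 : c1 * S3 * S2 * F2t + c3 * S2 * F2t = s2 * c1 * S3 * F2t + s2 * c3 * F2t := by
    calc c1 * S3 * S2 * F2t + c3 * S2 * F2t = (c1 * S3 + c3) * S2 * F2t := by
          simp only [Matrix.add_mul]
      _ = s2 * (c1 * S3 + c3) * F2t := by rw [← hPR4]
      _ = s2 * c1 * S3 * F2t + s2 * c3 * F2t := by
          simp only [Matrix.mul_add, Matrix.add_mul, ← Matrix.mul_assoc]
  have z2 : Zk * S2 * S3 * S2 * F2t = s2 * b * S2 * S3 * F2t + s2 * w * S2 * S3 * F2t := by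
    calc Zk * S2 * S3 * S2 * F2t = Zk * (S2 * S3 * S2) * F2t := by
          simp only [← Matrix.mul_assoc]
      _ = Zk * (S3 * S2 * S3) * F2t := by rw [hPB]
      _ = Zk * S3 * (S2 * S3 * F2t) := by simp only [Matrix.mul_assoc]
      _ = s2 * Zk * (S2 * S3 * F2t) := by rw [← hC3]
      _ = s2 * (b + w) * (S2 * S3 * F2t) := by rw [hZ]
      _ = s2 * b * S2 * S3 * F2t + s2 * w * S2 * S3 * F2t := by
          simp only [Matrix.mul_add, Matrix.add_mul, ← Matrix.mul_assoc]
  have z3 : c3 * S2 * S3 * X3 = s2 * c1 * X3 := by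
    rw [← hPR3a]
  have z4 : s2 * c1 * X3 * S3 = s2 * c1 * S3 * F2t + s2 * c1 * S1 * S2 * X2t * S3 := by
    calc s2 * c1 * X3 * S3 = s2 * c1 * (F2t + S1 * S2 * X2t) * S3 := by rw [← hX3]
      _ = s2 * c1 * (F2t * S3) + s2 * c1 * S1 * S2 * X2t * S3 := by
          simp only [Matrix.mul_add, Matrix.add_mul, ← Matrix.mul_assoc]
      _ = s2 * c1 * (S3 * F2t) + s2 * c1 * S1 * S2 * X2t * S3 := by rw [hC2]
      _ = s2 * c1 * S3 * F2t + s2 * c1 * S1 * S2 * X2t * S3 := by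
          simp only [← Matrix.mul_assoc]
  have z5 : s2 * b * S2 * F2t * S3 = s2 * b * S2 * S3 * F2t := by
    calc s2 * b * S2 * F2t * S3 = s2 * b * S2 * (F2t * S3) := by
          simp only [Matrix.mul_assoc]
      _ = s2 * b * S2 * (S3 * F2t) := by rw [hC2]
      _ = s2 * b * S2 * S3 * F2t := by simp only [← Matrix.mul_assoc]
  have z6 : s2 * s1 * F1 * b * S3 = -(s2 * s1 * w * F2t * S3) + s2 * s1 * c0 * X2t * S3 := by
    calc s2 * s1 * F1 * b * S3 = s2 * s1 * (F1 * b) * S3 := by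
          simp only [Matrix.mul_assoc]
      _ = s2 * s1 * (-(w * F2t) + c0 * X2t) * S3 := by rw [hIH2]
      _ = -(s2 * s1 * w * F2t * S3) + s2 * s1 * c0 * X2t * S3 := by
          simp only [Matrix.mul_add, Matrix.add_mul, Matrix.mul_neg, Matrix.neg_mul,
            ← Matrix.mul_assoc]
  have z7 : s2 * s1 * c0 * X2t * S3 = s2 * c1 * S1 * S2 * X2t * S3 := by
    calc s2 * s1 * c0 * X2t * S3 = s2 * (s1 * c0) * X2t * S3 := by
          simp only [Matrix.mul_assoc]
      _ = s2 * (c1 * S1 * S2) * X2t * S3 := by rw [hPR3b]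
      _ = s2 * c1 * S1 * S2 * X2t * S3 := by simp only [← Matrix.mul_assoc]
  have z8 : s2 * s1 * w * F2t * S3 = s2 * w * S2 * S3 * F2t := by
    calc s2 * s1 * w * F2t * S3 = s2 * (s1 * w) * (F2t * S3) := by
          simp only [Matrix.mul_assoc]
      _ = s2 * (w * S2) * (S3 * F2t) := by rw [hw1, hC2]
      _ = s2 * w * S2 * S3 * F2t := by simp only [← Matrix.mul_assoc]
  have z9 : s2 * b = b * S3 := hC3b
  have z10 : s2 * b * S2 * F2t = b * S3 * S2 * F2t := by rw [hC3b]
  -- main computation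
  rw [← sub_eq_zero, hW2, hEZ, hF4, hX4, hF3]
  simp only [Matrix.mul_add, Matrix.add_mul, Matrix.mul_sub, Matrix.sub_mul,
    Matrix.mul_one, Matrix.one_mul, Matrix.neg_mul, Matrix.mul_neg, neg_neg,
    ← Matrix.mul_assoc]
  rw [Eh9, Eh1b]
  simp only [Matrix.mul_add, Matrix.add_mul, Matrix.mul_sub, Matrix.sub_mul,
    Matrix.mul_one, Matrix.one_mul, Matrix.neg_mul, Matrix.mul_neg, neg_neg,
    ← Matrix.mul_assoc]
  rw [ha]
  simp only [Matrix.mul_add, Matrix.add_mul, Matrix.mul_sub, Matrix.sub_mul,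
    Matrix.mul_one, Matrix.one_mul, Matrix.neg_mul, Matrix.mul_neg, neg_neg,
    ← Matrix.mul_assoc]
  rw [hF3t]
  simp only [Matrix.mul_add, Matrix.add_mul, Matrix.mul_sub, Matrix.sub_mul,
    Matrix.mul_one, Matrix.one_mul, Matrix.neg_mul, Matrix.mul_neg, neg_neg,
    ← Matrix.mul_assoc]
  rw [hF2]
  simp only [Matrix.mul_add, Matrix.add_mul, Matrix.mul_sub, Matrix.sub_mul,
    Matrix.mul_one, Matrix.one_mul, Matrix.neg_mul, Matrix.mul_neg, neg_neg,
    ← Matrix.mul_assoc]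
  have total :
      (s2 * c1 * S3 * F2t + s2 * c3 * F2t - (c1 * S3 * S2 * F2t + c3 * S2 * F2t)) +
      (s2 * b * S2 * S3 * F2t + s2 * w * S2 * S3 * F2t - Zk * S2 * S3 * S2 * F2t) +
      (c3 * S2 * S3 * X3 - s2 * c1 * X3) +
      (s2 * c1 * X3 * S3 - (s2 * c1 * S3 * F2t + s2 * c1 * S1 * S2 * X2t * S3)) +
      (s2 * b * S2 * F2t * S3 - s2 * b * S2 * S3 * F2t) +
      (-(s2 * s1 * w * F2t * S3) + s2 * s1 * c0 * X2t * S3 - s2 * s1 * F1 * b * S3) +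
      (s2 * c1 * S1 * S2 * X2t * S3 - s2 * s1 * c0 * X2t * S3) +
      (s2 * s1 * w * F2t * S3 - s2 * w * S2 * S3 * F2t) +
      (s2 * b - b * S3) +
      (b * S3 * S2 * F2t - s2 * b * S2 * F2t) = 0 := by
    rw [z1, z2, z3, z4, z5, z6, z7, z8, z10, z9]
    abel
  rw [← total]
  abel

end AuxStep

section BaseMain
variable {K : Type*} [CommRing K] {N : ℕ}

theorem base_case (σm : Matrix (Fin N × Fin N) (Fin N × Fin N) K)
    (Cc : Fin N → Fin N → Fin N → K)
    (hrel3 : qlSigma σm 2 0 * qlC Cc 2 0 =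
      qlC Cc 2 1 * qlSigma σm 3 0 * qlSigma σm 3 1)
    (hrel4 : qlSigma σm 2 0 * (qlC Cc 2 0 * qlSigma σm 3 1 + qlC Cc 2 1) =
      (qlC Cc 2 0 * qlSigma σm 3 1 + qlC Cc 2 1) * qlSigma σm 3 0) :
    -(qlExt (qlW σm Cc 0) * qlF σm 3 3) + qlC Cc 2 1 * qlX2 σm 3 3 =
      qlF σm 2 2 * qlW σm Cc 1 := by
  have e4 : qlSigma σm 2 0 * qlC Cc 2 0 * qlSigma σm 3 1 + qlSigma σm 2 0 * qlC Cc 2 1 =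
      qlC Cc 2 0 * qlSigma σm 3 1 * qlSigma σm 3 0 + qlC Cc 2 1 * qlSigma σm 3 0 := by
    have h := hrel4
    simp only [Matrix.mul_add, Matrix.add_mul, ← Matrix.mul_assoc] at h
    exact h
  have hW0 : qlW σm Cc 0 = qlC Cc 1 0 := rfl
  have hZ0 : qlZ σm Cc 0 = qlC Cc 1 0 := rfl
  have hW1 : qlW σm Cc 1 = qlC Cc 2 1 + qlExt (qlZ σm Cc 0) * qlSigma σm 3 1 -
      qlExt (qlW σm Cc 0) := rfl
  have hF33 : qlF σm 3 3 = 1 - qlSigma σm 3 1 * qlF σm 3 2 := rfl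
  have hF32 : qlF σm 3 2 = 1 - qlSigma σm 3 0 * qlF σm 3 1 := rfl
  have hF31 : qlF σm 3 1 = 1 := rfl
  have hF22 : qlF σm 2 2 = 1 - qlSigma σm 2 0 * qlF σm 2 1 := rfl
  have hF21 : qlF σm 2 1 = 1 := rfl
  have hX33 : qlX2 σm 3 3 = qlF σm 3 2 + qlSigma σm 3 0 * qlSigma σm 3 1 * qlX2 σm 3 2 := rfl
  have hX32 : qlX2 σm 3 2 = 1 := rfl
  rw [← sub_eq_zero, hW1, hW0, hZ0, hF33, hX33, hF32, hF31, hF22, hF21, hX32,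
    extC Cc 1 0 (by omega)]
  simp only [Matrix.mul_add, Matrix.add_mul, Matrix.mul_sub, Matrix.sub_mul,
    Matrix.mul_one, Matrix.one_mul, Matrix.neg_mul, Matrix.mul_neg, neg_neg,
    ← Matrix.mul_assoc]
  have total : (qlC Cc 2 1 * qlSigma σm 3 0 * qlSigma σm 3 1 -
        qlSigma σm 2 0 * qlC Cc 2 0) +
      (qlSigma σm 2 0 * qlC Cc 2 0 * qlSigma σm 3 1 + qlSigma σm 2 0 * qlC Cc 2 1 -
        (qlC Cc 2 0 * qlSigma σm 3 1 * qlSigma σm 3 0 + qlC Cc 2 1 * qlSigma σm 3 0)) =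
      0 := by
    rw [← hrel3, e4]
    abel
  rw [← total]
  abel

end BaseMain


/-- Key recursion identity for the BRST–bar comparison in a quantum Lie algebra
(structure tensors `σ`, `C` satisfying the braid relation, the quantum Jacobi identity,
`C₁δ₃σ₁ = σ₂σ₁C₂` and `(σ₂C₁δ₃+C₂)σ₁ = σ₁(σ₂C₁δ₃+C₂)`): the elements `W_n`
(`W_2 = C_1`, `W_{n+1} = Z_{n+1} - W_n δ_{n+1}`) satisfy, for every `m ≥ 2`
(below `m = k + 2`),
`- f_{1→m+1} W_m δ_{m+1} + x^{(2)}_{m+1} C_m = W_{m+1} f_{1→m}`.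
(Operator words are read left to right, so a word `X Y` has matrix `Mat(Y) * Mat(X)`.) -/
theorem quantumLie_W_recursion_identity {K : Type*} [CommRing K] {N : ℕ}
    (σm : Matrix (Fin N × Fin N) (Fin N × Fin N) K)
    (Cc : Fin N → Fin N → Fin N → K)
    (hbraid : qlSigma σm 3 0 * qlSigma σm 3 1 * qlSigma σm 3 0 =
      qlSigma σm 3 1 * qlSigma σm 3 0 * qlSigma σm 3 1)
    (hjacobi : qlC Cc 1 0 * qlC Cc 2 0 =
      qlC Cc 1 0 * qlC Cc 2 0 * qlSigma σm 3 1 + qlC Cc 1 0 * qlC Cc 2 1)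
    (hrel3 : qlSigma σm 2 0 * qlC Cc 2 0 =
      qlC Cc 2 1 * qlSigma σm 3 0 * qlSigma σm 3 1)
    (hrel4 : qlSigma σm 2 0 * (qlC Cc 2 0 * qlSigma σm 3 1 + qlC Cc 2 1) =
      (qlC Cc 2 0 * qlSigma σm 3 1 + qlC Cc 2 1) * qlSigma σm 3 0) :
    ∀ k : ℕ,
      -(qlExt (qlW σm Cc k) * qlF σm (k + 3) (k + 3)) +
        qlC Cc (k + 2) (k + 1) * qlX2 σm (k + 3) (k + 3) =
      qlF σm (k + 2) (k + 2) * qlW σm Cc (k + 1) := by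
  intro k
  induction k using Nat.strong_induction_on with
  | _ k ih =>
    rcases k with _ | j
    · exact base_case σm Cc hrel3 hrel4
    · rcases j with _ | i
      · -- k = 1, use aux_step at k = 0 with w = 0
        refine aux_step σm Cc hbraid hrel3 hrel4 0 0 ?_ ?_ ?_ (ih 0 (by omega)) ?_
        · rw [add_zero]
          rfl
        · rw [Matrix.mul_zero, Matrix.zero_mul]
        · rw [Matrix.mul_zero, Matrix.zero_mul]
        · have hE2 : qlExt (qlExt (qlW σm Cc 0)) = qlC Cc 3 0 := by
            rw [show qlW σm Cc 0 = qlC Cc 1 0 from rfl, extC Cc 1 0 (by omega),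
              extC Cc 2 0 (by omega)]
          simp [hE2, show qlF σm 3 1 = 1 from rfl, show qlX2 σm 4 2 = 1 from rfl]
      · -- k = i + 2, use aux_step at k = i + 1 with w = E³ (W i)
        have hZW : qlZ σm Cc (i + 1) = qlW σm Cc (i + 1) + qlExt (qlW σm Cc i) := by
          rw [show qlW σm Cc (i + 1) = qlZ σm Cc (i + 1) - qlExt (qlW σm Cc i) from rfl]
          abel
        refine aux_step σm Cc hbraid hrel3 hrel4 (i + 1)
          (qlExt (qlExt (qlExt (qlW σm Cc i)))) ?_ ?_ ?_ (ih (i + 1) (by omega)) ?_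
        · rw [hZW, ext_add, ext_add]
        · have h := commSEEE σm (qlW σm Cc i)
          rwa [← ext3] at h
        · have h := commSEE σm (qlExt (qlW σm Cc i))
          rwa [← extExt] at h
        · have h := congrArg qlExt (congrArg qlExt (ih i (by omega)))
          rw [ext_add, ext_neg, ext_mul, ext_mul, ext_mul,
            extF σm (i + 3) (i + 3) le_rfl, extX σm (i + 3) (i + 3) le_rfl,
            extC Cc (i + 2) (i + 1) (by omega), extF σm (i + 2) (i + 2) le_rfl,
            ext_add, ext_neg, ext_mul, ext_mul, ext_mul,
            extF σm (i + 4) (i + 3) (by omega), extX σm (i + 4) (i + 3) (by omega),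
            extC Cc (i + 3) (i + 1) (by omega), extF σm (i + 3) (i + 2) (by omega)] at h
          exact h.symm
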